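/- arXiv:2008.11535 — 3 statements merged into one kernel-verified Lean document; each statement's English description precedes it below -/
import Mathlib

section
/- Let 𝒪 and |·| be the variant Kleene ordinal notation system, and suppose A ⊆ 𝒪 is a nonempty recursively enumerable set closed under the successor notation (n ∈ A implies 2^n ∈ A). Then there exists a notation b ∈ 𝒪 with |b| = sup{|m| : m ∈ A}; in particular sup{|m| + 1 : m ∈ A} < sup{|m| + 1 : m ∈ 𝒪}. -/
open Nat.Partrec (Code)

/-- The `e`-th partial computable function. -/
def phi (e : ℕ) : ℕ →. ℕ := (Denumerable.ofNat Code e).eval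

/-- The variant Kleene ordinal notation system, as the smallest relation between
notations `n : ℕ` and their ordinal values `|n|`:
`0` has value `0`; if `n` has value `o` then `2 ^ n` has value `o + 1`; and if
`φ_e` is total, with values `m k = φ_e k` that are all notations of values `g k`,
then `3 * 5 ^ e` is a notation of value `sup_k |φ_e k| = ⨆ k, g k`. -/
inductive KO : ℕ → Ordinal → Prop
  | zero : KO 0 0
  | succ (n : ℕ) (o : Ordinal) : KO n o → KO (2 ^ n) (o + 1)
  | lim (e : ℕ) (m : ℕ → ℕ) (g : ℕ → Ordinal) :
      (∀ k : ℕ, m k ∈ phi e k) →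
      (∀ k : ℕ, KO (m k) (g k)) →
      KO (3 * 5 ^ e) (⨆ k, g k)

/-!
Dovetailing the semidecision procedure of `A` gives a total computable `f` with range `A`; if
`φ_e = f` then `3 · 5 ^ e` is a notation for `sup_k |f k| = sup {|m| : m ∈ A}`. Every notation
denotes a countable ordinal, so `ω₁` bounds the values of `𝒪` and the supremum over `𝒪` is a
genuine supremum rather than the junk value `0`; it is at least `sup {|m| : m ∈ A} + 2`, the value
of `2 ^ 2 ^ (3 · 5 ^ e)`.
-/

open Ordinal

theorem REPred.exists_code_eval_dom_iff {p : ℕ → Prop} (hp : REPred p) :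
    ∃ c : Code, ∀ n, (c.eval n).Dom ↔ p n := by
  obtain ⟨c, hc⟩ := Code.exists_code.1 (Partrec.nat_iff.1 (hp.map (Computable.const 0).to₂))
  exact ⟨c, fun n => by simp [hc, Part.assert]⟩

theorem REPred.exists_computable_range_eq {A : Set ℕ} (hA : REPred (· ∈ A)) (hne : A.Nonempty) :
    ∃ f : ℕ → ℕ, Computable f ∧ Set.range f = A := by
  obtain ⟨a, ha⟩ := hne
  obtain ⟨c, hc⟩ := hA.exists_code_eval_dom_iff
  -- `f (Nat.pair n s)` is `n` if `c` halts on `n` within `s` steps, and `a` otherwise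
  let f : ℕ → ℕ := fun k => (Code.evaln k.unpair.2 c k.unpair.1).casesOn a fun _ => k.unpair.1
  have hf : Primrec f :=
    Primrec.option_casesOn
      (Code.primrec_evaln.comp (((Primrec.snd.comp Primrec.unpair).pair (Primrec.const c)).pair
        (Primrec.fst.comp Primrec.unpair)))
      (Primrec.const a) (Primrec.fst.comp (Primrec.unpair.comp Primrec.fst)).to₂
  refine ⟨f, hf.to_comp, Set.Subset.antisymm ?_ fun n hn => ?_⟩
  · rintro _ ⟨k, rfl⟩
    rcases hk : Code.evaln k.unpair.2 c k.unpair.1 with _ | y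
    · simpa [f, hk] using ha
    · simpa [f, hk] using (hc _).1 (Code.evaln_sound hk).1
  · obtain ⟨s, hs⟩ := Code.evaln_complete.1 (Part.get_mem ((hc n).2 hn))
    exact ⟨Nat.pair n s, by simp [f, Option.mem_def.1 hs]⟩

theorem KO.exists_iSup_of_computable {f : ℕ → ℕ} (hf : Computable f) {g : ℕ → Ordinal}
    (hg : ∀ k, KO (f k) (g k)) : ∃ b, KO b (⨆ k, g k) := by
  obtain ⟨c, hc⟩ := Code.exists_code.1 (Partrec.nat_iff.1 hf)
  exact ⟨_, KO.lim (Encodable.encode c) f g (fun k => by simp [phi, hc]) hg⟩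

theorem KO.exists_sSup_image {A : Set ℕ} {ν : ℕ → Ordinal} (hre : REPred (· ∈ A))
    (hne : A.Nonempty) (hmem : ∀ m ∈ A, KO m (ν m)) : ∃ b, KO b (sSup (ν '' A)) := by
  obtain ⟨f, hf, rfl⟩ := REPred.exists_computable_range_eq hre hne
  rw [← Set.range_comp]
  exact KO.exists_iSup_of_computable hf fun k => hmem _ (Set.mem_range_self k)

theorem KO.lt_omega_one {n : ℕ} {o : Ordinal} (h : KO n o) : o < ω₁ := by
  induction h with
  | zero => exact omega_pos 1
  | succ _ _ _ ih => exact (Cardinal.isSuccLimit_omega 1).add_one_lt ih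
  | lim _ _ _ _ _ ih => exact iSup_lt_omega_one ih

theorem KO.add_one_lt_sSup {b : ℕ} {o : Ordinal} (h : KO b o) :
    o + 1 < sSup {x : Ordinal | ∃ m : ℕ, ∃ o : Ordinal, KO m o ∧ x = o + 1} := by
  have hbdd : BddAbove {x : Ordinal | ∃ m : ℕ, ∃ o : Ordinal, KO m o ∧ x = o + 1} := by
    refine ⟨ω₁, ?_⟩
    rintro _ ⟨m, o, hm, rfl⟩
    exact ((Cardinal.isSuccLimit_omega 1).add_one_lt hm.lt_omega_one).le
  calc o + 1 < o + 1 + 1 := Order.lt_add_one_iff.2 le_rfl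
    _ ≤ _ := le_csSup hbdd ⟨_, o + 1, h.succ, rfl⟩

theorem exists_notation_sup_general (A : Set ℕ) (ν : ℕ → Ordinal)
    (hne : A.Nonempty) (hre : REPred (· ∈ A))
    (hmem : ∀ m ∈ A, KO m (ν m)) :
    (∃ b : ℕ, KO b (sSup (ν '' A))) ∧
      sSup ((fun m => ν m + 1) '' A) <
        sSup {x : Ordinal | ∃ m : ℕ, ∃ o : Ordinal, KO m o ∧ x = o + 1} := by
  obtain ⟨b, hb⟩ := KO.exists_sSup_image hre hne hmem
  refine ⟨⟨b, hb⟩, lt_of_le_of_lt ?_ hb.add_one_lt_sSup⟩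
  refine csSup_le (hne.image _) ?_
  rintro _ ⟨m, hm, rfl⟩
  exact add_le_add_left (le_csSup bddAbove_of_small (Set.mem_image_of_mem ν hm)) 1

/-- If `A ⊆ 𝒪` (with norms given by `ν`) is a nonempty r.e. set closed under the
successor notation, then some notation `b ∈ 𝒪` has `|b| = sup {|m| : m ∈ A}`;
in particular `sup {|m| + 1 : m ∈ A} < sup {|m| + 1 : m ∈ 𝒪}`. -/
theorem exists_notation_sup (A : Set ℕ) (ν : ℕ → Ordinal)
    (hne : A.Nonempty) (hre : REPred (· ∈ A))
    (hmem : ∀ m ∈ A, KO m (ν m)) (hsucc : ∀ m ∈ A, 2 ^ m ∈ A) :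
    (∃ b : ℕ, KO b (sSup (ν '' A))) ∧
      sSup ((fun m => ν m + 1) '' A) <
        sSup {x : Ordinal | ∃ m : ℕ, ∃ o : Ordinal, KO m o ∧ x = o + 1} :=
  exists_notation_sup_general A ν hne hre hmem
end

section
/- Suppose ≼₁ is a partial order on a set of ordinals (or any linear order) such that between any two elements one can witness finite-pattern reflection: for all α ≤ β, α ≼₁ β holds if and only if for every finite X ⊆ {γ : γ < α} and every finite Y ⊆ {γ : α ≤ γ < β} there exists a finite set Ỹ with X < Ỹ < α and an isomorphism of (X ∪ Ỹ, ≤, ≼₁) with (X ∪ Y, ≤, ≼₁). Then ≼₁ restricted to any subset is transitive: if α ≼₁ β and β ≼₁ γ with α ≤ β ≤ γ, then α ≼₁ γ. -/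
/-!
Let `a < b ≤ c` and take a pattern `X ∪ Y` with `X < a ≤ Y < c`. Split `Y` at `b` into `Y₁ < b ≤ Y₂`.
Reflection at `(b, c)`, applied to the finite set `P = {a} ∪ X ∪ Y₁` below `b` and to `Y₂`, moves `Y₂`
to some `Z` with `P < Z < b`; an isomorphism of well-ordered patterns fixes their common initial
segment `P`, so it restricts to an isomorphism `X ∪ Y₁ ∪ Z ≅ X ∪ Y`. Since `a < Z < b`, reflection
at `(a, b)` moves `Y₁ ∪ Z` below `a`, and composing the two isomorphisms witnesses `a ≼₁ c`.
-/

open Set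

theorem Set.BijOn.of_union_of_eqOn_id {α : Type*} {f : α → α} {S A B : Set α}
    (hbij : BijOn f (S ∪ A) (S ∪ B)) (hS : EqOn f id S) (hA : Disjoint S A) (hB : Disjoint S B) :
    BijOn f A B := by
  refine ⟨fun x hx => ?_, hbij.injOn.mono subset_union_right, fun y hy => ?_⟩
  · rcases hbij.mapsTo (Or.inr hx : x ∈ S ∪ A) with h | h
    · have hfx : f (f x) = f x := hS h
      rw [hbij.injOn (Or.inl h) (Or.inr hx) hfx] at h
      exact absurd hx (hA.notMem_of_mem_left h)
    · exact h
  · obtain ⟨u, hu, rfl⟩ := hbij.surjOn (Or.inr hy : y ∈ S ∪ B)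
    rcases hu with hu | hu
    · rw [hS hu] at hy
      exact absurd hy (hB.notMem_of_mem_left hu)
    · exact ⟨u, hu, rfl⟩

section

variable {α : Type*} [LinearOrder α]

theorem StrictMonoOn.eqOn_id_of_bijOn_union [WellFoundedLT α] {f : α → α} {S A B : Set α}
    (hf : StrictMonoOn f (S ∪ A)) (hbij : BijOn f (S ∪ A) (S ∪ B))
    (hA : ∀ s ∈ S, ∀ x ∈ A, s < x) (hB : ∀ s ∈ S, ∀ y ∈ B, s < y) : EqOn f id S := by
  intro x
  induction x using WellFoundedLT.induction with
  | _ x ih =>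
  intro hx
  have hxS : x ∈ S ∪ A := Or.inl hx
  rcases lt_trichotomy (f x) x with hlt | heq | hgt
  · have hfx : f x ∈ S := by
      rcases hbij.mapsTo hxS with h | h
      · exact h
      · exact absurd (hB x hx _ h) hlt.not_gt
    have := hf (Or.inl hfx) hxS hlt
    rw [ih _ hlt hfx] at this
    exact absurd this (lt_irrefl _)
  · exact heq
  · obtain ⟨u, hu, hfu⟩ := hbij.surjOn (Or.inl hx : x ∈ S ∪ B)
    have hux : u < x := (hf.lt_iff_lt hu hxS).1 (hfu ▸ hgt)
    have huS : u ∈ S := hu.resolve_right fun h => (hA x hx u h).not_gt hux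
    rw [ih u hux huS] at hfu
    exact absurd hfu hux.ne

def IsPatternIso (r : α → α → Prop) (f : α → α) (A B : Set α) : Prop :=
  BijOn f A B ∧ ∀ u ∈ A, ∀ w ∈ A, (u ≤ w ↔ f u ≤ f w) ∧ (r u w ↔ r (f u) (f w))

namespace IsPatternIso

variable {r : α → α → Prop} {f g : α → α} {A B C : Set α}

theorem strictMonoOn (h : IsPatternIso r f A B) : StrictMonoOn f A :=
  fun u hu w hw huw => lt_of_not_ge fun hwu => huw.not_ge ((h.2 w hw u hu).1.2 hwu)

theorem comp (hf : IsPatternIso r f B C) (hg : IsPatternIso r g A B) :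
    IsPatternIso r (f ∘ g) A C := by
  refine ⟨hf.1.comp hg.1, fun u hu w hw => ?_⟩
  have hgu := hg.1.mapsTo hu
  have hgw := hg.1.mapsTo hw
  exact ⟨(hg.2 u hu w hw).1.trans (hf.2 _ hgu _ hgw).1,
    (hg.2 u hu w hw).2.trans (hf.2 _ hgu _ hgw).2⟩

theorem mono {A' B' : Set α} (h : IsPatternIso r f A B) (hA : A' ⊆ A) (hbij : BijOn f A' B') :
    IsPatternIso r f A' B' :=
  ⟨hbij, fun u hu w hw => h.2 u (hA hu) w (hA hw)⟩

theorem restrict_initial [WellFoundedLT α] {S S' : Set α} (h : IsPatternIso r f (S ∪ A) (S ∪ B))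
    (hA : ∀ s ∈ S, ∀ x ∈ A, s < x) (hB : ∀ s ∈ S, ∀ y ∈ B, s < y) (hS' : S' ⊆ S) :
    IsPatternIso r f (S' ∪ A) (S' ∪ B) := by
  have hfix : EqOn f id S := h.strictMonoOn.eqOn_id_of_bijOn_union h.1 hA hB
  have hdisj : ∀ {T : Set α}, (∀ s ∈ S, ∀ x ∈ T, s < x) → Disjoint S T := fun hT =>
    disjoint_left.2 fun s hs hsT => lt_irrefl s (hT s hs s hsT)
  refine h.mono (union_subset_union_left A hS') ?_
  refine (((bijOn_id S').congr (hfix.mono hS').symm).union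
    (h.1.of_union_of_eqOn_id hfix (hdisj hA) (hdisj hB)) ?_)
  exact h.1.injOn.mono (union_subset_union_left A hS')

end IsPatternIso

def PatternReflects (r : α → α → Prop) (a b : α) : Prop :=
  ∀ X Y : Finset α, (∀ x ∈ X, x < a) → (∀ y ∈ Y, a ≤ y ∧ y < b) →
    ∃ (Yt : Finset α) (f : α → α), (∀ x ∈ X, ∀ y ∈ Yt, x < y) ∧ (∀ y ∈ Yt, y < a) ∧
      IsPatternIso r f ↑(X ∪ Yt) ↑(X ∪ Y)

theorem PatternReflects.trans [WellFoundedLT α] {r : α → α → Prop} {a b c : α}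
    (hab : PatternReflects r a b) (hbc : PatternReflects r b c) (h : a ≤ b) :
    PatternReflects r a c := by
  classical
  rcases h.eq_or_lt with rfl | hlt
  · exact hbc
  intro X Y hX hY
  set Y₁ := Y.filter (· < b)
  set Y₂ := Y.filter (¬ · < b)
  set P := insert a (X ∪ Y₁)
  have hP : ∀ x ∈ P, x < b := by
    simp only [P, Y₁, Finset.mem_insert, Finset.mem_union, Finset.mem_filter]
    rintro x (rfl | hx | hx)
    exacts [hlt, (hX x hx).trans hlt, hx.2]
  have hY₂ : ∀ y ∈ Y₂, b ≤ y ∧ y < c := fun y hy =>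
    ⟨not_lt.1 (Finset.mem_filter.1 hy).2, (hY y (Finset.mem_filter.1 hy).1).2⟩
  obtain ⟨Z, f, hPZ, hZb, hf⟩ := hbc P Y₂ hP hY₂
  have hZ : ∀ z ∈ Y₁ ∪ Z, a ≤ z ∧ z < b := by
    simp only [Y₁, Finset.mem_union, Finset.mem_filter]
    rintro z (hz | hz)
    exacts [⟨(hY z hz.1).1, hz.2⟩, ⟨(hPZ a (Finset.mem_insert_self _ _) z hz).le, hZb z hz⟩]
  obtain ⟨W, g, hXW, hWa, hg⟩ := hab X (Y₁ ∪ Z) hX hZ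
  refine ⟨W, f ∘ g, hXW, hWa, IsPatternIso.comp ?_ hg⟩
  have hf' : IsPatternIso r f (↑(X ∪ Y₁) ∪ ↑Z) (↑(X ∪ Y₁) ∪ ↑Y₂) := by
    rw [Finset.coe_union P, Finset.coe_union P] at hf
    refine hf.restrict_initial hPZ
      (fun s hs y hy => (hP s hs).trans_le (hY₂ y hy).1) ?_
    exact Finset.coe_subset.2 (Finset.subset_insert _ _)
  rwa [← Finset.coe_union, ← Finset.coe_union, Finset.union_assoc, Finset.union_assoc,
    Finset.filter_union_filter_not_eq] at hf'

end

/-- If a relation `≼₁` (refining `≤` on the ordinals) satisfies the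
finite-pattern reflection characterization — `α ≼₁ β` iff every finite pattern
`X ∪ Y` with `X < α ≤ Y < β` is isomorphic (as a `(≤, ≼₁)`-structure) to some
`X ∪ Ỹ` with `X < Ỹ < α` — then `≼₁` is transitive along `≤`. -/
theorem transitive_of_reflection (r : Ordinal → Ordinal → Prop)
    (hchar : ∀ a b : Ordinal, a ≤ b →
      (r a b ↔ ∀ (X Y : Finset Ordinal), (∀ x ∈ X, x < a) →
        (∀ y ∈ Y, a ≤ y ∧ y < b) →
        ∃ (Yt : Finset Ordinal) (f : Ordinal → Ordinal),
          (∀ x ∈ X, ∀ y ∈ Yt, x < y) ∧ (∀ y ∈ Yt, y < a) ∧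
          Set.BijOn f ↑(X ∪ Yt) ↑(X ∪ Y) ∧
          (∀ u ∈ X ∪ Yt, ∀ w ∈ X ∪ Yt,
            (u ≤ w ↔ f u ≤ f w) ∧ (r u w ↔ r (f u) (f w))))) :
    ∀ a b c : Ordinal, a ≤ b → b ≤ c → r a b → r b c → r a c := by
  have hchar' : ∀ a b : Ordinal, a ≤ b → (r a b ↔ PatternReflects r a b) := hchar
  intro a b c hab hbc rab rbc
  exact (hchar' a c (hab.trans hbc)).2
    (((hchar' a b hab).1 rab).trans ((hchar' b c hbc).1 rbc) hab)
end

section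
/- Let I, ≺, (T_i)_{i∈I} satisfy the hypotheses of the ordinal-norm theorem (each true theory T_i with j ≺ i implies ‖T_j‖ < ‖T_i‖). If the whole family is true (the intended model satisfies every T_i), then ≺ is well-founded; in particular there is no i with i ≺ i. -/
/-!
Along `j ≺ i` the norm strictly increases. Enumerate the nonempty r.e. set `P j` as the range of
a total `φ_k`; the limit axiom of `T_i` gives `3 · 5 ^ k ∈ P i`, whose value `sup_x |φ_k x|`
dominates every `|m| + 1` with `m ∈ P j`, since `P j` also contains `2 ^ m`, of value `|m| + 1`.
Truth of the family makes all these values defined, so `≺` embeds into `<` on ordinals.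
-/

open Nat.Partrec (Code)

/-- The `e`-th recursively enumerable subset of ℕ. -/
def WSet (e : ℕ) : Set ℕ := {x | (phi e x).Dom}

lemma two_pow_ne_three_mul_five_pow (n e : ℕ) : 2 ^ n ≠ 3 * 5 ^ e := by
  intro h
  have h3 : 3 ∣ 2 ^ n := h ▸ Dvd.intro _ rfl
  have := Nat.Prime.dvd_of_dvd_pow Nat.prime_three h3
  omega

-- Stated with `m = m'` rather than for a common `m`, so that `cases` can split the second
-- derivation without having to unify indices such as `2 ^ n` and `0`.
theorem KO.eq_of_eq {m : ℕ} {o : Ordinal} (h : KO m o) :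
    ∀ {m' : ℕ} {o' : Ordinal}, KO m' o' → m = m' → o = o' := by
  induction h with
  | zero =>
    rintro m' o' (_ | ⟨n, _, _⟩ | ⟨e, _, _, _, _⟩) hm
    · rfl
    · exact absurd hm.symm (by positivity)
    · exact absurd hm.symm (by positivity)
  | succ n o _ ih =>
    rintro m' o' (_ | ⟨n', _, hn'⟩ | ⟨e, _, _, _, _⟩) hm
    · exact absurd hm (by positivity)
    · rw [ih hn' (Nat.pow_right_injective le_rfl hm)]
    · exact absurd hm (two_pow_ne_three_mul_five_pow n e)
  | lim e m g hmem _ ih =>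
    rintro m' o' (_ | ⟨n', _, _⟩ | ⟨e', m', g', hmem', hg'⟩) hm
    · exact absurd hm (by positivity)
    · exact absurd hm.symm (two_pow_ne_three_mul_five_pow n' e)
    · obtain rfl : e = e' := Nat.pow_right_injective (by norm_num) (by omega : 5 ^ e = 5 ^ e')
      congr 1
      exact funext fun k => ih k (hg' k) (Part.mem_unique (hmem k) (hmem' k))

theorem KO.unique {m : ℕ} {o o' : Ordinal} (h : KO m o) (h' : KO m o') : o = o' :=
  h.eq_of_eq h' rfl

theorem exists_phi_eq_some {f : ℕ → ℕ} (hf : Computable f) :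
    ∃ k, ∀ x, phi k x = Part.some (f x) := by
  obtain ⟨c, hc⟩ := Nat.Partrec.Code.exists_code.mp (Partrec.nat_iff.mp hf.partrec)
  exact ⟨Encodable.encode c, fun x => by simp [phi, hc]⟩

open Nat.Partrec.Code in
-- `f ⟨t, x⟩` is `x` if `φ_n x` converges within `t` steps, and the default element `a` otherwise.
theorem exists_computable_range_eq_WSet {n a : ℕ} (ha : a ∈ WSet n) :
    ∃ f : ℕ → ℕ, Computable f ∧ Set.range f = WSet n := by
  let c : Code := Denumerable.ofNat Code n
  let f : ℕ → ℕ := fun p => ((evaln p.unpair.1 c p.unpair.2).map fun _ => p.unpair.2).getD a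
  have hf : Primrec f := by
    have h₁ : Primrec fun p : ℕ => p.unpair.1 := Primrec.fst.comp Primrec.unpair
    have h₂ : Primrec fun p : ℕ => p.unpair.2 := Primrec.snd.comp Primrec.unpair
    exact Primrec.option_getD.comp
      (Primrec.option_map (primrec_evaln.comp ((h₁.pair (Primrec.const c)).pair h₂))
        (h₂.comp Primrec.fst).to₂) (Primrec.const a)
  refine ⟨f, hf.to_comp, Set.Subset.antisymm ?_ fun m hm => ?_⟩
  · rintro _ ⟨p, rfl⟩
    rcases h : evaln p.unpair.1 c p.unpair.2 with _ | y
    · simpa [f, h] using ha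
    · simp only [f, h, Option.map_some, Option.getD_some]
      exact (evaln_sound h).fst
  · obtain ⟨y, hy⟩ : ∃ y, y ∈ c.eval m := Part.dom_iff_mem.mp hm
    obtain ⟨t, ht⟩ := evaln_complete.mp hy
    refine ⟨Nat.pair t m, ?_⟩
    simp [f, Option.mem_def.mp ht]

universe u

open Classical in
noncomputable def koVal (m : ℕ) : Ordinal.{u} :=
  if h : ∃ o : Ordinal.{u}, KO m o then h.choose else 0

theorem koVal_spec {m : ℕ} (h : ∃ o : Ordinal.{u}, KO m o) : KO m (koVal.{u} m) := by
  simp only [koVal, dif_pos h]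
  exact h.choose_spec

theorem koVal_eq {m : ℕ} {o : Ordinal} (h : KO m o) : koVal m = o :=
  (koVal_spec ⟨o, h⟩).unique h

theorem koVal_three_mul_five_pow {k : ℕ} {f : ℕ → ℕ} (hk : ∀ x, phi k x = Part.some (f x))
    (hf : ∀ x, ∃ o : Ordinal.{u}, KO (f x) o) : koVal (3 * 5 ^ k) = ⨆ x, koVal.{u} (f x) :=
  koVal_eq (KO.lim k f _ (fun x => hk x ▸ Part.mem_some _) fun x => koVal_spec (hf x))

/-- The norm `‖T‖ = sup {|m| + 1 : T ⊨ O(m̄)}` of a theory `T` whose `O`-theorems form `A`. -/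
noncomputable def koNorm (A : Set ℕ) : Ordinal.{u} :=
  ⨆ m : A, koVal (m : ℕ) + 1

theorem koVal_lt_koNorm {A : Set ℕ} {m : ℕ} (hm : m ∈ A) : koVal.{u} m < koNorm A :=
  (Order.lt_add_one_iff.2 le_rfl).trans_le
    (Ordinal.le_iSup (fun m : A => koVal.{u} (m : ℕ) + 1) ⟨m, hm⟩)

-- Closure under `m ↦ 2 ^ m` turns each `|m| + 1` into the value `|2 ^ m|` of an element of `A`.
theorem koNorm_le_iSup_koVal {A : Set ℕ} {f : ℕ → ℕ} (hsucc : ∀ m ∈ A, 2 ^ m ∈ A)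
    (hA : A ⊆ {m | ∃ o : Ordinal.{u}, KO m o}) (hf : Set.range f = A) :
    koNorm A ≤ ⨆ x, koVal.{u} (f x) := by
  refine Ordinal.iSup_le fun ⟨m, hm⟩ => ?_
  obtain ⟨x, hx⟩ : 2 ^ m ∈ Set.range f := hf ▸ hsucc m hm
  calc koVal.{u} m + 1 = koVal (f x) := by rw [hx, koVal_eq (KO.succ _ _ (koVal_spec (hA hm)))]
    _ ≤ ⨆ x, koVal (f x) := Ordinal.le_iSup (fun x => koVal.{u} (f x)) x

theorem koNorm_lt_koNorm {A B : Set ℕ} {n : ℕ} (hA : A = WSet n) (h0 : 0 ∈ A)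
    (hsucc : ∀ m ∈ A, 2 ^ m ∈ A) (hAO : A ⊆ {m | ∃ o : Ordinal.{u}, KO m o})
    (hlim : ∀ k : ℕ, (∀ x : ℕ, (phi k x).Dom) → (∀ x y : ℕ, y ∈ phi k x → y ∈ A) →
      3 * 5 ^ k ∈ B) :
    koNorm.{u} A < koNorm B := by
  obtain ⟨f, hf, hrange⟩ := exists_computable_range_eq_WSet (hA ▸ h0)
  obtain ⟨k, hk⟩ := exists_phi_eq_some hf
  rw [← hA] at hrange
  have hfA : ∀ x, f x ∈ A := fun x => hrange ▸ ⟨x, rfl⟩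
  have hkB : 3 * 5 ^ k ∈ B := hlim k (fun x => by simp [hk]) fun x y hy => by
    rw [hk, Part.mem_some_iff] at hy
    exact hy ▸ hfA x
  calc koNorm A ≤ ⨆ x, koVal (f x) := koNorm_le_iSup_koVal hsucc hAO hrange
    _ = koVal (3 * 5 ^ k) := (koVal_three_mul_five_pow hk fun x => hAO (hfA x)).symm
    _ < koNorm B := koVal_lt_koNorm hkB

theorem prec_wellFounded_of_true_general {I : Type*} (prec : I → I → Prop)
    (P : I → Set ℕ)
    (h0 : ∀ k : I, 0 ∈ P k)
    (h1 : ∀ (k : I) (m : ℕ), m ∈ P k → 2 ^ m ∈ P k)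
    (hre : ∀ i j : I, prec j i → ∃ n : ℕ, P j = WSet n)
    (hlim : ∀ i j : I, prec j i → ∀ k : ℕ, (∀ x : ℕ, (phi k x).Dom) →
      (∀ x y : ℕ, y ∈ phi k x → y ∈ P j) → 3 * 5 ^ k ∈ P i)
    (htrue : ∀ k : I, P k ⊆ {m : ℕ | ∃ o : Ordinal, KO m o}) :
    (¬ ∃ g : ℕ → I, ∀ k : ℕ, prec (g (k + 1)) (g k)) ∧
      ∀ i : I, ¬ prec i i := by
  have hnorm : ∀ i j, prec j i → koNorm (P j) < koNorm (P i) := fun i j hji =>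
    let ⟨_, hn⟩ := hre i j hji
    koNorm_lt_koNorm hn (h0 j) (h1 j) (htrue j) (hlim i j hji)
  have hwf : WellFounded prec := Subrelation.wf (hnorm _ _) (InvImage.wf _ wellFounded_lt)
  exact ⟨fun ⟨g, hg⟩ => (wellFounded_iff_isEmpty_descending_chain.1 hwf).elim ⟨g, hg⟩,
    hwf.irrefl.irrefl⟩

/-- Well-foundedness of true self-referential theories.  With the hypotheses of
the ordinal-norm theorem holding for every pair `j ≺ i` (each theory, presented
by `P k = {m : T_k ⊨ O(m̄)}`, proves `O(0)` and the successor axioms; for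
`j ≺ i`, `P j` is some `W_n`, `P j ⊆ 𝒪`, and `T_i` proves the limit axiom for
any total computable enumeration with range in `P j`; and by truth of the whole
family `P k ⊆ 𝒪` for every `k`), the relation `≺` is well-founded: there is no
infinite descending sequence; in particular no `i` satisfies `i ≺ i`. -/
theorem prec_wellFounded_of_true {I : Type*} (prec : I → I → Prop)
    (P : I → Set ℕ)
    (h0 : ∀ k : I, 0 ∈ P k)
    (h1 : ∀ (k : I) (m : ℕ), m ∈ P k → 2 ^ m ∈ P k)
    (hre : ∀ i j : I, prec j i → ∃ n : ℕ, P j = WSet n)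
    (hsound : ∀ i j : I, prec j i → P j ⊆ {m : ℕ | ∃ o : Ordinal, KO m o})
    (hlim : ∀ i j : I, prec j i → ∀ k : ℕ, (∀ x : ℕ, (phi k x).Dom) →
      (∀ x y : ℕ, y ∈ phi k x → y ∈ P j) → 3 * 5 ^ k ∈ P i)
    (htrue : ∀ k : I, P k ⊆ {m : ℕ | ∃ o : Ordinal, KO m o}) :
    (¬ ∃ g : ℕ → I, ∀ k : ℕ, prec (g (k + 1)) (g k)) ∧
      ∀ i : I, ¬ prec i i :=
  prec_wellFounded_of_true_general prec P h0 h1 hre hlim htrue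
end
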